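/- arXiv:1702.07579 — 5 statements merged into one kernel-verified Lean document; each statement's English description precedes it below -/
import Mathlib

section
/- Let c, h, k : ℝ → ℝ² be smooth and 2π-periodic with c'(θ) ≠ 0 for all θ, and let A > 0. Then the first Sobolev metric g¹ is symmetric: ∫₀^{2π} ⟨h(θ) − A·(D_s(D_s h))(θ), k(θ)⟩ · ‖c'(θ)‖ dθ = ∫₀^{2π} ⟨k(θ) − A·(D_s(D_s k))(θ), h(θ)⟩ · ‖c'(θ)‖ dθ. -/
open RealInnerProductSpace Real MeasureTheory intervalIntegral ContDiff

/-- Arc-length derivative `D_s f = f' / ‖c'‖` along the curve `c`. -/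
noncomputable def Ds (c f : ℝ → EuclideanSpace ℝ (Fin 2)) (θ : ℝ) :
    EuclideanSpace ℝ (Fin 2) := ‖deriv c θ‖⁻¹ • deriv f θ

/-- Unit tangent vector `v = c' / ‖c'‖` of the curve `c`. -/
noncomputable def unitTangent (c : ℝ → EuclideanSpace ℝ (Fin 2)) (θ : ℝ) :
    EuclideanSpace ℝ (Fin 2) := ‖deriv c θ‖⁻¹ • deriv c θ

lemma periodic_deriv' {E : Type*} [NormedAddCommGroup E] [NormedSpace ℝ E]
    {f : ℝ → E} {T : ℝ} (hf : Function.Periodic f T) :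
    Function.Periodic (deriv f) T := by
  intro x
  have : (fun y => f (y + T)) = f := funext fun y => hf y
  calc deriv f (x + T) = deriv (fun y => f (y + T)) x := (deriv_comp_add_const f T x).symm
    _ = deriv f x := by rw [this]

lemma contDiff_Ds (c f : ℝ → EuclideanSpace ℝ (Fin 2))
    (hc : ContDiff ℝ ∞ c) (hf : ContDiff ℝ ∞ f) (himm : ∀ θ : ℝ, deriv c θ ≠ 0) :
    ContDiff ℝ ∞ (Ds c f) := by
  have hc' : ContDiff ℝ ∞ (deriv c) := (contDiff_infty_iff_deriv.mp hc).2
  have hf' : ContDiff ℝ ∞ (deriv f) := (contDiff_infty_iff_deriv.mp hf).2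
  have hn : ContDiff ℝ ∞ (fun θ => ‖deriv c θ‖) := by
    rw [contDiff_iff_contDiffAt]
    exact fun θ => (hc'.contDiffAt).norm ℝ (himm θ)
  have hni : ContDiff ℝ ∞ (fun θ => ‖deriv c θ‖⁻¹) := by
    rw [contDiff_iff_contDiffAt]
    exact fun θ => (hn.contDiffAt).inv (norm_ne_zero_iff.mpr (himm θ))
  exact hni.smul hf'

theorem stmt_5 (c h k : ℝ → EuclideanSpace ℝ (Fin 2))
    (hc : ContDiff ℝ (⊤ : ℕ∞) c) (hh : ContDiff ℝ (⊤ : ℕ∞) h) (hk : ContDiff ℝ (⊤ : ℕ∞) k)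
    (hcper : Function.Periodic c (2 * π)) (hhper : Function.Periodic h (2 * π))
    (hkper : Function.Periodic k (2 * π))
    (himm : ∀ θ : ℝ, deriv c θ ≠ 0) (A : ℝ) (hA : 0 < A) :
    ∫ θ in (0:ℝ)..(2 * π), ⟪h θ - A • Ds c (Ds c h) θ, k θ⟫ * ‖deriv c θ‖ =
      ∫ θ in (0:ℝ)..(2 * π), ⟪k θ - A • Ds c (Ds c k) θ, h θ⟫ * ‖deriv c θ‖ := by
  replace hc : ContDiff ℝ ∞ c := hc.of_le (by simp)
  replace hh : ContDiff ℝ ∞ h := hh.of_le (by simp)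
  replace hk : ContDiff ℝ ∞ k := hk.of_le (by simp)
  have hn : ContDiff ℝ ∞ (fun θ => ‖deriv c θ‖) := by
    rw [contDiff_iff_contDiffAt]
    exact fun θ => ((contDiff_infty_iff_deriv.mp hc).2.contDiffAt).norm ℝ (himm θ)
  -- Ds periodicity
  have hDsper : ∀ f : ℝ → EuclideanSpace ℝ (Fin 2), Function.Periodic f (2 * π) →
      Function.Periodic (Ds c f) (2 * π) := by
    intro f hfper x
    unfold Ds
    rw [periodic_deriv' hfper x, periodic_deriv' hcper x]
  -- key pointwise identity
  have key : ∀ (u w : ℝ → EuclideanSpace ℝ (Fin 2)), ContDiff ℝ ∞ u → ContDiff ℝ ∞ w →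
      ∀ θ : ℝ, ⟪Ds c (Ds c u) θ, w θ⟫ * ‖deriv c θ‖ =
        deriv (fun t => ⟪Ds c u t, w t⟫) θ - ⟪Ds c u θ, Ds c w θ⟫ * ‖deriv c θ‖ := by
    intro u w hu hw θ
    have hDu := contDiff_Ds c u hc hu himm
    have hd1 : HasDerivAt (Ds c u) (deriv (Ds c u) θ) θ :=
      (hDu.differentiable (by simp) θ).hasDerivAt
    have hd2 : HasDerivAt w (deriv w θ) θ := (hw.differentiable (by simp) θ).hasDerivAt
    have hF := (hd1.inner ℝ hd2).deriv
    rw [hF]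
    have hnz : ‖deriv c θ‖ ≠ 0 := norm_ne_zero_iff.mpr (himm θ)
    simp only [Ds, real_inner_smul_left, real_inner_smul_right]
    field_simp
    ring
  -- continuity of everything
  have hcont : ∀ (u w : ℝ → EuclideanSpace ℝ (Fin 2)), ContDiff ℝ ∞ u → ContDiff ℝ ∞ w →
      Continuous fun θ => ⟪Ds c (Ds c u) θ, w θ⟫ * ‖deriv c θ‖ := by
    intro u w hu hw
    exact (((contDiff_Ds c _ hc (contDiff_Ds c u hc hu himm) himm).inner ℝ hw).mul hn).continuous
  -- ∫ ⟪Ds² u, w⟫ ‖c'‖ = - ∫ ⟪Ds u, Ds w⟫ ‖c'‖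
  have IBP : ∀ (u w : ℝ → EuclideanSpace ℝ (Fin 2)), ContDiff ℝ ∞ u → ContDiff ℝ ∞ w →
      Function.Periodic u (2 * π) → Function.Periodic w (2 * π) →
      (∫ θ in (0:ℝ)..(2 * π), ⟪Ds c (Ds c u) θ, w θ⟫ * ‖deriv c θ‖) =
        - ∫ θ in (0:ℝ)..(2 * π), ⟪Ds c u θ, Ds c w θ⟫ * ‖deriv c θ‖ := by
    intro u w hu hw huper hwper
    have hDu := contDiff_Ds c u hc hu himm
    set F : ℝ → ℝ := fun t => ⟪Ds c u t, w t⟫ with hFdef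
    have hF : ContDiff ℝ ∞ F := hDu.inner ℝ hw
    have hFper : Function.Periodic F (2 * π) := fun x => by
      simp only [hFdef, hDsper u huper x, hwper x]
    have hderint : (∫ θ in (0:ℝ)..(2 * π), deriv F θ) = F (2 * π) - F 0 := by
      apply intervalIntegral.integral_deriv_eq_sub
      · exact fun x _ => hF.differentiable (by simp) x
      · exact ((contDiff_infty_iff_deriv.mp hF).2.continuous).intervalIntegrable _ _
    have hFval : F (2 * π) = F 0 := by
      have := hFper 0
      simpa using this
    rw [funext (key u w hu hw)]
    rw [intervalIntegral.integral_sub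
        (((contDiff_infty_iff_deriv.mp hF).2.continuous).intervalIntegrable _ _)
        ((((contDiff_Ds c u hc hu himm).inner ℝ (contDiff_Ds c w hc hw himm)).mul
          hn).continuous.intervalIntegrable _ _)]
    rw [hderint, hFval]
    ring
  -- split integrals
  have split : ∀ (u w : ℝ → EuclideanSpace ℝ (Fin 2)), ContDiff ℝ ∞ u → ContDiff ℝ ∞ w →
      (∫ θ in (0:ℝ)..(2 * π), ⟪u θ - A • Ds c (Ds c u) θ, w θ⟫ * ‖deriv c θ‖) =
        (∫ θ in (0:ℝ)..(2 * π), ⟪u θ, w θ⟫ * ‖deriv c θ‖)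
          - A * ∫ θ in (0:ℝ)..(2 * π), ⟪Ds c (Ds c u) θ, w θ⟫ * ‖deriv c θ‖ := by
    intro u w hu hw
    have e : ∀ θ : ℝ, ⟪u θ - A • Ds c (Ds c u) θ, w θ⟫ * ‖deriv c θ‖ =
        ⟪u θ, w θ⟫ * ‖deriv c θ‖ - A * (⟪Ds c (Ds c u) θ, w θ⟫ * ‖deriv c θ‖) := by
      intro θ
      rw [inner_sub_left, real_inner_smul_left]
      ring
    rw [funext e, intervalIntegral.integral_sub (g := fun θ => A * (⟪Ds c (Ds c u) θ, w θ⟫ * ‖deriv c θ‖))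
      (((hu.inner ℝ hw).mul hn).continuous.intervalIntegrable _ _)
      ((continuous_const.mul (hcont u w hu hw)).intervalIntegrable _ _),
      intervalIntegral.integral_const_mul]
  rw [split h k hh hk, split k h hk hh, IBP h k hh hk hhper hkper, IBP k h hk hh hkper hhper]
  have comm1 : (∫ θ in (0:ℝ)..(2 * π), ⟪h θ, k θ⟫ * ‖deriv c θ‖) =
      ∫ θ in (0:ℝ)..(2 * π), ⟪k θ, h θ⟫ * ‖deriv c θ‖ := by
    congr 1; funext θ; rw [real_inner_comm]
  have comm2 : (∫ θ in (0:ℝ)..(2 * π), ⟪Ds c h θ, Ds c k θ⟫ * ‖deriv c θ‖) =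
      ∫ θ in (0:ℝ)..(2 * π), ⟪Ds c k θ, Ds c h θ⟫ * ‖deriv c θ‖ := by
    congr 1; funext θ; rw [real_inner_comm]
  rw [comm1, comm2]
end

section
/- Let c, h : ℝ → ℝ² be smooth and 2π-periodic with c'(θ) ≠ 0 for all θ, and let A > 0. Then g¹_c(h,h) is given by the positive expression ∫₀^{2π} ⟨h(θ) − A·(D_s(D_s h))(θ), h(θ)⟩ · ‖c'(θ)‖ dθ = ∫₀^{2π} ( ‖h(θ)‖² + A·‖(D_s h)(θ)‖² ) · ‖c'(θ)‖ dθ; in particular g¹_c(h,h) ≥ 0, with equality if and only if h is identically zero. -/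
open RealInnerProductSpace Real MeasureTheory intervalIntegral

theorem stmt_6 (c h : ℝ → EuclideanSpace ℝ (Fin 2))
    (hc : ContDiff ℝ (⊤ : ℕ∞) c) (hh : ContDiff ℝ (⊤ : ℕ∞) h)
    (hcper : Function.Periodic c (2 * π)) (hhper : Function.Periodic h (2 * π))
    (himm : ∀ θ : ℝ, deriv c θ ≠ 0) (A : ℝ) (hA : 0 < A) :
    (∫ θ in (0:ℝ)..(2 * π), ⟪h θ - A • Ds c (Ds c h) θ, h θ⟫ * ‖deriv c θ‖ =
      ∫ θ in (0:ℝ)..(2 * π), (‖h θ‖ ^ 2 + A * ‖Ds c h θ‖ ^ 2) * ‖deriv c θ‖) ∧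
    0 ≤ ∫ θ in (0:ℝ)..(2 * π), ⟪h θ - A • Ds c (Ds c h) θ, h θ⟫ * ‖deriv c θ‖ ∧
    ((∫ θ in (0:ℝ)..(2 * π), ⟪h θ - A • Ds c (Ds c h) θ, h θ⟫ * ‖deriv c θ‖) = 0 ↔
      ∀ θ : ℝ, h θ = 0) := by
  have hπ : (0:ℝ) < 2 * π := by positivity
  set n : ℝ → ℝ := fun θ => ‖deriv c θ‖ with hn_def
  have hn_ne : ∀ θ, n θ ≠ 0 := fun θ => norm_ne_zero_iff.mpr (himm θ)
  have hn_pos : ∀ θ, 0 < n θ := fun θ => norm_pos_iff.mpr (himm θ)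
  have hc' : ContDiff ℝ ((⊤:ℕ∞) : WithTop ℕ∞) c := hc.of_le (by simp)
  have hh' : ContDiff ℝ ((⊤:ℕ∞) : WithTop ℕ∞) h := hh.of_le (by simp)
  have hdc : ContDiff ℝ ((⊤:ℕ∞) : WithTop ℕ∞) (deriv c) := (contDiff_infty_iff_deriv.mp hc').2
  have hdh : ContDiff ℝ ((⊤:ℕ∞) : WithTop ℕ∞) (deriv h) := (contDiff_infty_iff_deriv.mp hh').2
  have hn : ContDiff ℝ ((⊤:ℕ∞) : WithTop ℕ∞) n := hdc.norm ℝ himm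
  have hninv : ContDiff ℝ ((⊤:ℕ∞) : WithTop ℕ∞) (fun θ => (n θ)⁻¹) := hn.inv hn_ne
  set u : ℝ → EuclideanSpace ℝ (Fin 2) := Ds c h with hu_def
  have hu : ContDiff ℝ ((⊤:ℕ∞) : WithTop ℕ∞) u := hninv.smul hdh
  have hdu : ContDiff ℝ ((⊤:ℕ∞) : WithTop ℕ∞) (deriv u) := (contDiff_infty_iff_deriv.mp hu).2
  -- deriv h θ = n θ • u θ
  have hdh_eq : ∀ θ, deriv h θ = n θ • u θ := by
    intro θ
    simp only [hu_def, Ds, smul_smul, mul_inv_cancel₀ (hn_ne θ), one_smul]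
    rw [show n θ * ‖deriv c θ‖⁻¹ = 1 from mul_inv_cancel₀ (hn_ne θ), one_smul]
  -- F = ⟪u, h⟫ and its derivative
  set F : ℝ → ℝ := fun θ => ⟪u θ, h θ⟫ with hF_def
  have hF : ContDiff ℝ ((⊤:ℕ∞) : WithTop ℕ∞) F := hu.inner ℝ hh'
  have hFderiv : ∀ θ, deriv F θ = ⟪u θ, deriv h θ⟫ + ⟪deriv u θ, h θ⟫ := by
    intro θ
    exact (HasDerivAt.inner ℝ ((hu.differentiable (by simp) θ).hasDerivAt)
      ((hh'.differentiable (by simp) θ).hasDerivAt)).deriv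
  -- pointwise identity
  have key : ∀ θ, ⟪h θ - A • Ds c (Ds c h) θ, h θ⟫ * n θ =
      (‖h θ‖ ^ 2 + A * ‖u θ‖ ^ 2) * n θ - A * deriv F θ := by
    intro θ
    have h1 : Ds c (Ds c h) θ = (n θ)⁻¹ • deriv u θ := rfl
    rw [hFderiv θ, h1, inner_sub_left, real_inner_smul_left, real_inner_smul_left,
      hdh_eq θ, real_inner_smul_right, real_inner_self_eq_norm_sq,
      real_inner_self_eq_norm_sq]
    have hne := hn_ne θ
    field_simp
    ring
  -- periodicity facts
  have hper_deriv : ∀ (f : ℝ → EuclideanSpace ℝ (Fin 2)), Function.Periodic f (2 * π) →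
      deriv f (2 * π) = deriv f 0 := by
    intro f hf
    have : (fun x => f (x + 2 * π)) = f := funext fun x => hf x
    calc deriv f (2 * π) = deriv f (0 + 2 * π) := by rw [zero_add]
      _ = deriv (fun x => f (x + 2 * π)) 0 := (deriv_comp_add_const ..).symm
      _ = deriv f 0 := by rw [this]
  have hF_per : F (2 * π) = F 0 := by
    have hu2 : u (2 * π) = u 0 := by
      simp only [hu_def, Ds, hper_deriv c hcper, hper_deriv h hhper]
    have hh2 : h (2 * π) = h 0 := by simpa using hhper 0
    simp only [hF_def, hu2, hh2]
  -- continuity / integrability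
  have hG_cont : Continuous (fun θ => (‖h θ‖ ^ 2 + A * ‖u θ‖ ^ 2) * n θ) := by
    have := hh.continuous
    have := hu.continuous
    have := hn.continuous
    fun_prop
  have hG_int : IntervalIntegrable (fun θ => (‖h θ‖ ^ 2 + A * ‖u θ‖ ^ 2) * n θ)
      volume 0 (2 * π) := hG_cont.intervalIntegrable _ _
  have hdF_int : IntervalIntegrable (fun θ => A * deriv F θ) volume 0 (2 * π) :=
    (continuous_const.mul (contDiff_infty_iff_deriv.mp hF).2.continuous).intervalIntegrable _ _
  -- main integral identity
  have hmain : (∫ θ in (0:ℝ)..(2 * π), ⟪h θ - A • Ds c (Ds c h) θ, h θ⟫ * n θ) =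
      ∫ θ in (0:ℝ)..(2 * π), (‖h θ‖ ^ 2 + A * ‖u θ‖ ^ 2) * n θ := by
    have : (∫ θ in (0:ℝ)..(2 * π), ⟪h θ - A • Ds c (Ds c h) θ, h θ⟫ * n θ) =
        ∫ θ in (0:ℝ)..(2 * π),
          ((‖h θ‖ ^ 2 + A * ‖u θ‖ ^ 2) * n θ - A * deriv F θ) := by
      apply intervalIntegral.integral_congr
      intro θ _
      exact key θ
    rw [this, intervalIntegral.integral_sub hG_int hdF_int,
      intervalIntegral.integral_const_mul,
      intervalIntegral.integral_deriv_eq_sub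
        (fun x _ => (hF.differentiable (by simp) x))
        ((contDiff_infty_iff_deriv.mp hF).2.continuous.intervalIntegrable _ _),
      hF_per, sub_self, mul_zero, sub_zero]
  refine ⟨hmain, ?_, ?_⟩
  · rw [hmain]
    apply intervalIntegral.integral_nonneg hπ.le
    intro θ _
    have := hn_pos θ
    positivity
  · constructor
    · intro hzero θ
      rw [hmain] at hzero
      -- the integrand vanishes on (0, 2π]
      have hae : (fun θ => (‖h θ‖ ^ 2 + A * ‖u θ‖ ^ 2) * n θ)
          =ᵐ[volume.restrict (Set.Ioc 0 (2 * π))] 0 := by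
        exact (integral_eq_zero_iff_of_nonneg
          (fun θ => by have := hn_pos θ; positivity)
          ((hG_cont.integrableOn_Ioc))).mp
          (by rwa [intervalIntegral.integral_of_le hπ.le] at hzero)
      have heq : Set.EqOn (fun θ => (‖h θ‖ ^ 2 + A * ‖u θ‖ ^ 2) * n θ) 0
          (Set.Ioc 0 (2 * π)) :=
        Measure.eqOn_Ioc_of_ae_eq volume hae hG_cont.continuousOn continuousOn_const
      obtain ⟨y, hy, hxy⟩ := hhper.exists_mem_Ioc hπ θ 0
      rw [zero_add] at hy
      have hz : (‖h y‖ ^ 2 + A * ‖u y‖ ^ 2) * n y = 0 := heq hy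
      have h2 : ‖h y‖ ^ 2 + A * ‖u y‖ ^ 2 = 0 :=
        (mul_eq_zero.mp hz).resolve_right (hn_ne y)
      have h3 : ‖h y‖ ^ 2 = 0 := by nlinarith [sq_nonneg ‖h y‖, sq_nonneg ‖u y‖]
      rw [hxy]
      simpa using pow_eq_zero_iff (n := 2) (by norm_num) |>.mp h3
    · intro hzero
      have : ∀ θ, ⟪h θ - A • Ds c (Ds c h) θ, h θ⟫ * n θ = 0 := by
        intro θ; rw [hzero θ, inner_zero_right, zero_mul]
      calc (∫ θ in (0:ℝ)..(2 * π), ⟪h θ - A • Ds c (Ds c h) θ, h θ⟫ * n θ)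
          = ∫ _ in (0:ℝ)..(2 * π), (0:ℝ) := by
            apply intervalIntegral.integral_congr; intro θ _; exact this θ
        _ = 0 := intervalIntegral.integral_zero
end

section
/- Let c, m, h, k : ℝ → ℝ² be smooth and 2π-periodic with c'(θ) ≠ 0 for all θ. Then the function t ↦ ∫₀^{2π} ⟨h(θ), k(θ)⟩ · ‖c'(θ) + t·m'(θ)‖ dθ is differentiable at t = 0 with derivative ∫₀^{2π} ⟨D_s m(θ), v(θ)⟩ · ⟨h(θ), k(θ)⟩ · ‖c'(θ)‖ dθ. -/
open RealInnerProductSpace Real MeasureTheory intervalIntegral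

lemma normLineDeriv (a b : EuclideanSpace ℝ (Fin 2)) {x : ℝ} (hne : a + x • b ≠ 0) :
    HasDerivAt (fun t : ℝ => ‖a + t • b‖) (⟪b, a + x • b⟫ / ‖a + x • b‖) x := by
  have hg : HasDerivAt (fun t : ℝ => a + t • b) b x := by
    simpa using ((hasDerivAt_id x).smul_const b).const_add a
  have hinner : HasDerivAt (fun t : ℝ => ⟪a + t • b, a + t • b⟫)
      (⟪a + x • b, b⟫ + ⟪b, a + x • b⟫) x := hg.inner ℝ hg
  have hpos : (0:ℝ) < ⟪a + x • b, a + x • b⟫ := by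
    rw [real_inner_self_eq_norm_sq]
    exact pow_pos (norm_pos_iff.2 hne) 2
  have hsqrt := hinner.sqrt hpos.ne'
  have heq : ∀ t : ℝ, √(⟪a + t • b, a + t • b⟫) = ‖a + t • b‖ := fun t => by
    rw [real_inner_self_eq_norm_sq, Real.sqrt_sq (norm_nonneg _)]
  have : HasDerivAt (fun t : ℝ => ‖a + t • b‖)
      ((⟪a + x • b, b⟫ + ⟪b, a + x • b⟫) / (2 * √(⟪a + x • b, a + x • b⟫))) x := by
    simpa only [heq] using hsqrt
  convert this using 1
  rw [heq, real_inner_comm (a + x • b) b]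
  ring

theorem stmt_7 (c m h k : ℝ → EuclideanSpace ℝ (Fin 2))
    (hc : ContDiff ℝ (⊤ : ℕ∞) c) (hm : ContDiff ℝ (⊤ : ℕ∞) m) (hh : ContDiff ℝ (⊤ : ℕ∞) h)
    (hk : ContDiff ℝ (⊤ : ℕ∞) k)
    (hcper : Function.Periodic c (2 * π)) (hmper : Function.Periodic m (2 * π))
    (hhper : Function.Periodic h (2 * π)) (hkper : Function.Periodic k (2 * π))
    (himm : ∀ θ : ℝ, deriv c θ ≠ 0) :
    HasDerivAt
      (fun t : ℝ =>
        ∫ θ in (0:ℝ)..(2 * π), ⟪h θ, k θ⟫ * ‖deriv c θ + t • deriv m θ‖)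
      (∫ θ in (0:ℝ)..(2 * π),
        ⟪Ds c m θ, unitTangent c θ⟫ * ⟪h θ, k θ⟫ * ‖deriv c θ‖) 0 := by
  -- continuity of derivatives
  have hc' : Continuous (deriv c) := hc.continuous_deriv (by simp)
  have hm' : Continuous (deriv m) := hm.continuous_deriv (by simp)
  -- positive lower bound for ‖c'‖ on the compact interval
  obtain ⟨θ₀, _, hθ₀'⟩ := (isCompact_Icc (a := (0:ℝ)) (b := 2 * π)).exists_isMinOn
    (Set.nonempty_Icc.2 (by positivity)) (f := fun θ => ‖deriv c θ‖) (hc'.norm.continuousOn)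
  have hθ₀ : ∀ θ ∈ Set.Icc (0:ℝ) (2 * π), ‖deriv c θ₀‖ ≤ ‖deriv c θ‖ := fun θ hθ => hθ₀' hθ
  set δ : ℝ := ‖deriv c θ₀‖ with hδdef
  have hδpos : 0 < δ := norm_pos_iff.2 (himm θ₀)
  -- upper bound for ‖m'‖
  obtain ⟨θ₁, _, hθ₁'⟩ := (isCompact_Icc (a := (0:ℝ)) (b := 2 * π)).exists_isMaxOn
    (Set.nonempty_Icc.2 (by positivity)) (f := fun θ => ‖deriv m θ‖) (hm'.norm.continuousOn)
  have hθ₁ : ∀ θ ∈ Set.Icc (0:ℝ) (2 * π), ‖deriv m θ‖ ≤ ‖deriv m θ₁‖ := fun θ hθ => hθ₁' hθ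
  set M : ℝ := ‖deriv m θ₁‖ with hMdef
  have hMnn : 0 ≤ M := norm_nonneg _
  set ε : ℝ := δ / (M + 1) with hεdef
  have hεpos : 0 < ε := by positivity
  -- nonvanishing on the ball
  have hne : ∀ θ ∈ Set.Icc (0:ℝ) (2 * π), ∀ x ∈ Metric.ball (0:ℝ) ε,
      deriv c θ + x • deriv m θ ≠ 0 := by
    intro θ hθ x hx
    have h1 : δ ≤ ‖deriv c θ‖ := hθ₀ θ hθ
    have h2 : ‖deriv m θ‖ ≤ M := hθ₁ θ hθ
    have hxlt : |x| < ε := by simpa [Real.dist_eq] using hx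
    intro hzero
    have : deriv c θ = -(x • deriv m θ) := by
      rw [eq_neg_iff_add_eq_zero]; exact hzero
    have hnorm : ‖deriv c θ‖ = |x| * ‖deriv m θ‖ := by
      rw [this, norm_neg, norm_smul, Real.norm_eq_abs]
    have hle : δ ≤ |x| * ‖deriv m θ‖ := hnorm ▸ h1
    have hεM : ε * (M + 1) = δ := div_mul_cancel₀ _ (by linarith)
    nlinarith [abs_nonneg x, norm_nonneg (deriv m θ)]
  have hIoc_sub : Set.uIoc (0:ℝ) (2 * π) ⊆ Set.Icc 0 (2 * π) := by
    rw [Set.uIoc_of_le (by positivity)]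
    exact Set.Ioc_subset_Icc_self
  -- the parametric family and its derivative
  set F : ℝ → ℝ → ℝ := fun x θ => ⟪h θ, k θ⟫ * ‖deriv c θ + x • deriv m θ‖
  set F' : ℝ → ℝ → ℝ := fun x θ =>
    ⟪h θ, k θ⟫ * (⟪deriv m θ, deriv c θ + x • deriv m θ⟫ / ‖deriv c θ + x • deriv m θ‖)
  have hhk : Continuous fun θ => ⟪h θ, k θ⟫ :=
    hh.continuous.inner hk.continuous
  have key := intervalIntegral.hasDerivAt_integral_of_dominated_loc_of_deriv_le
    (μ := volume) (a := (0:ℝ)) (b := 2 * π) (x₀ := (0:ℝ)) (F := F) (F' := F')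
    (bound := fun θ => |⟪h θ, k θ⟫| * ‖deriv m θ‖) (Metric.ball_mem_nhds (0:ℝ) hεpos)
    (Filter.Eventually.of_forall fun x =>
      ((hhk.mul ((hc'.add ((continuous_const (y := x)).smul hm')).norm)).aestronglyMeasurable))
    (by
      apply Continuous.intervalIntegrable
      exact hhk.mul ((hc'.add ((continuous_const (y := (0:ℝ))).smul hm')).norm))
    (by
      apply Continuous.aestronglyMeasurable
      apply hhk.mul
      apply Continuous.div
        ((hm'.inner (hc'.add ((continuous_const (y := (0:ℝ))).smul hm'))))
        ((hc'.add ((continuous_const (y := (0:ℝ))).smul hm')).norm)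
      intro θ
      simp only [ne_eq, norm_eq_zero, Pi.add_apply, Pi.smul_apply', zero_smul, add_zero]
      exact himm θ)
    (Filter.Eventually.of_forall fun θ hθ x hx => by
      have hne' := hne θ (hIoc_sub hθ) x hx
      have : |⟪deriv m θ, deriv c θ + x • deriv m θ⟫ / ‖deriv c θ + x • deriv m θ‖|
          ≤ ‖deriv m θ‖ := by
        rw [abs_div, abs_of_nonneg (norm_nonneg _)]
        apply div_le_of_le_mul₀ (norm_nonneg _) (norm_nonneg _)
        exact abs_real_inner_le_norm _ _
      show ‖⟪h θ, k θ⟫ * (⟪deriv m θ, deriv c θ + x • deriv m θ⟫ /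
          ‖deriv c θ + x • deriv m θ‖)‖ ≤ _
      rw [Real.norm_eq_abs, abs_mul]
      exact mul_le_mul_of_nonneg_left this (abs_nonneg _))
    (by
      apply Continuous.intervalIntegrable
      exact hhk.abs.mul hm'.norm)
    (Filter.Eventually.of_forall fun θ hθ x hx => by
      have hne' := hne θ (hIoc_sub hθ) x hx
      exact (normLineDeriv (deriv c θ) (deriv m θ) hne').const_mul _)
  refine HasDerivAt.congr_deriv key.2 ?_
  apply intervalIntegral.integral_congr
  intro θ _
  simp only [F', Ds, unitTangent, zero_smul, add_zero, real_inner_smul_left,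
    real_inner_smul_right]
  have hnc : ‖deriv c θ‖ ≠ 0 := norm_ne_zero_iff.2 (himm θ)
  field_simp
end

section
/- Let c, m, h, k : ℝ → ℝ² be smooth and 2π-periodic with c'(θ) ≠ 0 for all θ. Then the function t ↦ ∫₀^{2π} ⟨h''(θ), k(θ)⟩ / ‖c'(θ) + t·m'(θ)‖ dθ is differentiable at t = 0 with derivative − ∫₀^{2π} ⟨D_s m(θ), v(θ)⟩ · ⟨h''(θ), k(θ)⟩ / ‖c'(θ)‖ dθ. -/
open RealInnerProductSpace Real MeasureTheory intervalIntegral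

lemma hasDerivAt_inv_norm_add_smul {E : Type*} [NormedAddCommGroup E]
    [InnerProductSpace ℝ E] (y w : E) (x : ℝ) (hne : y + x • w ≠ 0) :
    HasDerivAt (fun t : ℝ => (‖y + t • w‖)⁻¹)
      (-(⟪y + x • w, w⟫ / ‖y + x • w‖) / ‖y + x • w‖ ^ 2) x := by
  have hf : HasDerivAt (fun t : ℝ => y + t • w) w x := by
    simpa using ((hasDerivAt_id x).smul_const w).const_add y
  have h2 : HasDerivAt (fun t : ℝ => ‖y + t • w‖ ^ 2) (2 * ⟪y + x • w, w⟫) x := hf.norm_sq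
  have hn : ‖y + x • w‖ ≠ 0 := norm_ne_zero_iff.mpr hne
  have hne2 : ‖y + x • w‖ ^ 2 ≠ 0 := pow_ne_zero _ hn
  have h3 := h2.sqrt hne2
  have hsq : ∀ t : ℝ, Real.sqrt (‖y + t • w‖ ^ 2) = ‖y + t • w‖ := fun t =>
    Real.sqrt_sq (norm_nonneg _)
  have h4 : HasDerivAt (fun t : ℝ => ‖y + t • w‖) (⟪y + x • w, w⟫ / ‖y + x • w‖) x := by
    simp only [hsq] at h3
    convert h3 using 1
    field_simp
  exact h4.inv hn

theorem stmt_8 (c m h k : ℝ → EuclideanSpace ℝ (Fin 2))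
    (hc : ContDiff ℝ (⊤ : ℕ∞) c) (hm : ContDiff ℝ (⊤ : ℕ∞) m) (hh : ContDiff ℝ (⊤ : ℕ∞) h)
    (hk : ContDiff ℝ (⊤ : ℕ∞) k)
    (hcper : Function.Periodic c (2 * π)) (hmper : Function.Periodic m (2 * π))
    (hhper : Function.Periodic h (2 * π)) (hkper : Function.Periodic k (2 * π))
    (himm : ∀ θ : ℝ, deriv c θ ≠ 0) :
    HasDerivAt
      (fun t : ℝ =>
        ∫ θ in (0:ℝ)..(2 * π),
          ⟪deriv (deriv h) θ, k θ⟫ / ‖deriv c θ + t • deriv m θ‖)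
      (- ∫ θ in (0:ℝ)..(2 * π),
        ⟪Ds c m θ, unitTangent c θ⟫ * ⟪deriv (deriv h) θ, k θ⟫ /
          ‖deriv c θ‖) 0 := by
  have hc' : Continuous (deriv c) := hc.continuous_deriv (by simp)
  have hm' : Continuous (deriv m) := hm.continuous_deriv (by simp)
  have hh2 : Continuous (deriv (deriv h)) := by
    have := ((hh.of_le (by simp) : ContDiff ℝ (⊤ : ℕ∞) h).iterate_deriv 2).continuous
    simpa [Function.iterate_succ, Function.comp_def] using this
  have hcont_a : Continuous (fun θ => ⟪deriv (deriv h) θ, k θ⟫) :=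
    hh2.inner hk.continuous
  have h2π : (0:ℝ) ≤ 2 * π := by positivity
  obtain ⟨θ₀, hθ₀mem, hθ₀⟩ := (isCompact_Icc (a := (0:ℝ)) (b := 2*π)).exists_isMinOn
      (Set.nonempty_Icc.mpr h2π) hc'.norm.continuousOn
  obtain ⟨θ₁, hθ₁mem, hθ₁⟩ := (isCompact_Icc (a := (0:ℝ)) (b := 2*π)).exists_isMaxOn
      (Set.nonempty_Icc.mpr h2π) hm'.norm.continuousOn
  set m0 := ‖deriv c θ₀‖ with hm0def
  set M := ‖deriv m θ₁‖ with hMdef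
  have hm0 : 0 < m0 := norm_pos_iff.mpr (himm θ₀)
  have hM0 : 0 ≤ M := norm_nonneg _
  set ε := m0 / (2 * (M + 1)) with hεdef
  have hε : 0 < ε := by positivity
  have hεM : ε * M ≤ m0 / 2 := by
    have h5 : ε * (M + 1) = m0 / 2 := by
      rw [hεdef]; field_simp
    nlinarith
  have hlow : ∀ θ ∈ Set.Icc (0:ℝ) (2*π), ∀ x ∈ Metric.ball (0:ℝ) ε,
      m0 / 2 ≤ ‖deriv c θ + x • deriv m θ‖ := by
    intro θ hθ x hx
    have h1 : m0 ≤ ‖deriv c θ‖ := hθ₀ hθ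
    have h2 : ‖deriv m θ‖ ≤ M := hθ₁ hθ
    have hx' : |x| < ε := by simpa [Real.dist_eq] using hx
    have h3 : ‖x • deriv m θ‖ ≤ ε * M := by
      rw [norm_smul, Real.norm_eq_abs]
      exact mul_le_mul hx'.le h2 (norm_nonneg _) hε.le
    have h4 : ‖deriv c θ‖ ≤ ‖deriv c θ + x • deriv m θ‖ + ‖x • deriv m θ‖ := by
      calc ‖deriv c θ‖ = ‖(deriv c θ + x • deriv m θ) - x • deriv m θ‖ := by
            rw [add_sub_cancel_right]
        _ ≤ _ := norm_sub_le _ _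
    linarith
  have hIsub : Set.uIoc (0:ℝ) (2*π) ⊆ Set.Icc (0:ℝ) (2*π) := by
    rw [Set.uIoc_of_le h2π]
    exact Set.Ioc_subset_Icc_self
  set F' : ℝ → ℝ → ℝ := fun x θ =>
    ⟪deriv (deriv h) θ, k θ⟫ *
      (-(⟪deriv c θ + x • deriv m θ, deriv m θ⟫ / ‖deriv c θ + x • deriv m θ‖) /
        ‖deriv c θ + x • deriv m θ‖ ^ 2) with hF'def
  have key := intervalIntegral.hasDerivAt_integral_of_dominated_loc_of_deriv_le
    (μ := volume)
    (F := fun t θ => ⟪deriv (deriv h) θ, k θ⟫ / ‖deriv c θ + t • deriv m θ‖)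
    (F' := F') (x₀ := 0) (a := 0) (b := 2*π)
    (bound := fun θ => |⟪deriv (deriv h) θ, k θ⟫| * (M / (m0/2)^2))
    (Metric.ball_mem_nhds _ hε)
    (Filter.Eventually.of_forall fun (x : ℝ) =>
      (Measurable.aestronglyMeasurable (hcont_a.measurable.div
        ((hc'.add (hm'.const_smul x)).norm.measurable) :
        Measurable (fun θ => ⟪deriv (deriv h) θ, k θ⟫ / ‖deriv c θ + x • deriv m θ‖))))
    (by
      apply Continuous.intervalIntegrable
      apply hcont_a.div ((hc'.add (hm'.const_smul (0:ℝ))).norm)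
      intro θ
      simpa using norm_ne_zero_iff.mpr (himm θ))
    (by
      apply Measurable.aestronglyMeasurable
      exact hcont_a.measurable.mul
        (((((hc'.add (hm'.const_smul (0:ℝ))).inner hm').measurable.div
          ((hc'.add (hm'.const_smul (0:ℝ))).norm.measurable)).neg).div
          (((hc'.add (hm'.const_smul (0:ℝ))).norm.measurable).pow_const 2)))
    (Filter.Eventually.of_forall (by
      intro θ hθ x hx
      have hθ' : θ ∈ Set.Icc (0:ℝ) (2*π) := hIsub hθ
      have hn := hlow θ hθ' x hx
      have hnpos : 0 < ‖deriv c θ + x • deriv m θ‖ := lt_of_lt_of_le (by positivity) hn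
      have hCS := abs_real_inner_le_norm (deriv c θ + x • deriv m θ) (deriv m θ)
      have hmM : ‖deriv m θ‖ ≤ M := hθ₁ hθ'
      rw [hF'def]
      simp only [Real.norm_eq_abs, abs_mul]
      apply mul_le_mul_of_nonneg_left _ (abs_nonneg _)
      rw [abs_div, abs_neg, abs_div, abs_of_pos hnpos, abs_of_pos (pow_pos hnpos 2)]
      have h6 : |⟪deriv c θ + x • deriv m θ, deriv m θ⟫| / ‖deriv c θ + x • deriv m θ‖ ≤ M := by
        rw [div_le_iff₀ hnpos]
        calc |⟪deriv c θ + x • deriv m θ, deriv m θ⟫|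
            ≤ ‖deriv c θ + x • deriv m θ‖ * ‖deriv m θ‖ := hCS
          _ ≤ ‖deriv c θ + x • deriv m θ‖ * M := by
              exact mul_le_mul_of_nonneg_left hmM hnpos.le
          _ = M * ‖deriv c θ + x • deriv m θ‖ := by ring
      apply div_le_div₀ hM0 h6 (by positivity)
      exact pow_le_pow_left₀ (by positivity) hn 2))
    ((hcont_a.abs.mul continuous_const).intervalIntegrable _ _)
    (Filter.Eventually.of_forall (by
      intro θ hθ x hx
      have hθ' : θ ∈ Set.Icc (0:ℝ) (2*π) := hIsub hθ
      have hn := hlow θ hθ' x hx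
      have hne : deriv c θ + x • deriv m θ ≠ 0 := by
        refine norm_pos_iff.mp (lt_of_lt_of_le (by positivity) hn)
      have := (hasDerivAt_inv_norm_add_smul (deriv c θ) (deriv m θ) x hne).const_mul
        (⟪deriv (deriv h) θ, k θ⟫)
      simpa [hF'def, div_eq_mul_inv] using this))
  have hfinal : (- ∫ θ in (0:ℝ)..(2 * π),
      ⟪Ds c m θ, unitTangent c θ⟫ * ⟪deriv (deriv h) θ, k θ⟫ / ‖deriv c θ‖)
      = ∫ θ in (0:ℝ)..(2 * π), F' 0 θ := by
    rw [← intervalIntegral.integral_neg]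
    apply intervalIntegral.integral_congr
    intro θ _
    have hnc : ‖deriv c θ‖ ≠ 0 := norm_ne_zero_iff.mpr (himm θ)
    rw [hF'def]
    simp only [Ds, unitTangent, zero_smul, add_zero, real_inner_smul_left,
      real_inner_smul_right]
    rw [real_inner_comm (deriv c θ) (deriv m θ)]
    field_simp
  rw [hfinal]
  exact key.2
end

section
/- Let c, m, h, k : ℝ → ℝ² be smooth and 2π-periodic with c'(θ) ≠ 0 for all θ, and let A > 0. For t near 0 set G(t) = ∫₀^{2π} ( ⟨h(θ), k(θ)⟩ · ‖c'(θ) + t·m'(θ)‖ − A · ⟨h''(θ), k(θ)⟩ / ‖c'(θ) + t·m'(θ)‖ ) dθ, which is the Sobolev metric expression ∫ ⟨L₁h, k⟩ ds evaluated along the perturbed curve c + t·m. Then G is differentiable at t = 0 with derivative G'(0) = ∫₀^{2π} ⟨D_s m(θ), v(θ)⟩ · ( ⟨h(θ), k(θ)⟩ + A·⟨h''(θ), k(θ)⟩/‖c'(θ)‖² ) · ‖c'(θ)‖ dθ. -/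
open RealInnerProductSpace Real MeasureTheory intervalIntegral

lemma hasDerivAt_norm_affine {E : Type*} [NormedAddCommGroup E] [InnerProductSpace ℝ E]
    (x y : E) (t : ℝ) (hx : x + t • y ≠ 0) :
    HasDerivAt (fun s : ℝ => ‖x + s • y‖) (⟪y, x + t • y⟫ / ‖x + t • y‖) t := by
  have hu : HasDerivAt (fun s : ℝ => x + s • y) y t := by
    simpa using ((hasDerivAt_id t).smul_const y).const_add x
  have hi : HasDerivAt (fun s : ℝ => ⟪x + s • y, x + s • y⟫)
      (⟪x + t • y, y⟫ + ⟪y, x + t • y⟫) t := hu.inner ℝ hu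
  have hne : ⟪x + t • y, x + t • y⟫ ≠ 0 := by
    rw [real_inner_self_eq_norm_sq]
    exact pow_ne_zero 2 (norm_ne_zero_iff.2 hx)
  have h2 := hi.sqrt hne
  have heq : (fun s : ℝ => √(⟪x + s • y, x + s • y⟫)) = fun s : ℝ => ‖x + s • y‖ := by
    funext s; rw [← norm_eq_sqrt_real_inner]
  rw [heq] at h2
  convert h2 using 1
  rw [real_inner_comm (x + t • y) y, ← norm_eq_sqrt_real_inner]
  have : ‖x + t • y‖ ≠ 0 := norm_ne_zero_iff.2 hx
  field_simp
  ring

theorem stmt_9 (c m h k : ℝ → EuclideanSpace ℝ (Fin 2))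
    (hc : ContDiff ℝ (⊤ : ℕ∞) c) (hm : ContDiff ℝ (⊤ : ℕ∞) m) (hh : ContDiff ℝ (⊤ : ℕ∞) h)
    (hk : ContDiff ℝ (⊤ : ℕ∞) k)
    (hcper : Function.Periodic c (2 * π)) (hmper : Function.Periodic m (2 * π))
    (hhper : Function.Periodic h (2 * π)) (hkper : Function.Periodic k (2 * π))
    (himm : ∀ θ : ℝ, deriv c θ ≠ 0) (A : ℝ) (hA : 0 < A) :
    HasDerivAt
      (fun t : ℝ =>
        ∫ θ in (0:ℝ)..(2 * π),
          (⟪h θ, k θ⟫ * ‖deriv c θ + t • deriv m θ‖ -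
            A * ⟪deriv (deriv h) θ, k θ⟫ / ‖deriv c θ + t • deriv m θ‖))
      (∫ θ in (0:ℝ)..(2 * π),
        ⟪Ds c m θ, unitTangent c θ⟫ *
          (⟪h θ, k θ⟫ +
            A * ⟪deriv (deriv h) θ, k θ⟫ / ‖deriv c θ‖ ^ 2) *
          ‖deriv c θ‖) 0 := by
  have hc' : Continuous (deriv c) := hc.continuous_deriv (by simp)
  have hm' : Continuous (deriv m) := hm.continuous_deriv (by simp)
  have hh1 : ContDiff ℝ ((⊤ : ℕ∞) : WithTop ℕ∞) h := hh.of_le (by simp)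
  have hh'' : Continuous (deriv (deriv h)) :=
    ((contDiff_infty_iff_deriv.mp hh1).2).continuous_deriv (by simp)
  have ha : Continuous fun θ => ⟪h θ, k θ⟫ := hh.continuous.inner hk.continuous
  have hb : Continuous fun θ => ⟪deriv (deriv h) θ, k θ⟫ := hh''.inner hk.continuous
  have hπ : (0:ℝ) < 2 * π := by positivity
  have h0K : (0:ℝ) ∈ Set.Icc 0 (2 * π) := ⟨le_refl 0, le_of_lt hπ⟩
  -- minimum of ‖c'‖ on [0, 2π]
  obtain ⟨θ₀, hθ₀K, hθ₀⟩ := isCompact_Icc.exists_isMinOn ⟨0, h0K⟩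
    (hc'.norm.continuousOn (s := Set.Icc 0 (2 * π)))
  set δ := ‖deriv c θ₀‖ with hδdef
  have hδ : 0 < δ := norm_pos_iff.2 (himm θ₀)
  have hδle : ∀ θ ∈ Set.Icc 0 (2 * π), δ ≤ ‖deriv c θ‖ := fun θ hθ => hθ₀ hθ
  -- bounds
  obtain ⟨M, hM⟩ := isCompact_Icc.exists_bound_of_continuousOn
    (hm'.continuousOn (s := Set.Icc 0 (2 * π)))
  have hM0 : 0 ≤ M := le_trans (norm_nonneg _) (hM 0 h0K)
  obtain ⟨C1, hC1⟩ := isCompact_Icc.exists_bound_of_continuousOn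
    (ha.continuousOn (s := Set.Icc 0 (2 * π)))
  have hC10 : 0 ≤ C1 := le_trans (norm_nonneg _) (hC1 0 h0K)
  obtain ⟨C2, hC2⟩ := isCompact_Icc.exists_bound_of_continuousOn
    (hb.continuousOn (s := Set.Icc 0 (2 * π)))
  have hC20 : 0 ≤ C2 := le_trans (norm_nonneg _) (hC2 0 h0K)
  set ε := δ / (2 * (M + 1)) with hεdef
  have hε : 0 < ε := by positivity
  -- lower bound for the perturbed speed
  have hlow : ∀ θ ∈ Set.Icc 0 (2 * π), ∀ x : ℝ, |x| < ε →
      δ / 2 ≤ ‖deriv c θ + x • deriv m θ‖ := by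
    intro θ hθ x hx
    have h1 : ‖deriv c θ‖ ≤ ‖deriv c θ + x • deriv m θ‖ + ‖x • deriv m θ‖ := by
      calc ‖deriv c θ‖ = ‖(deriv c θ + x • deriv m θ) - x • deriv m θ‖ := by
            rw [add_sub_cancel_right]
        _ ≤ _ := norm_sub_le _ _
    have h2 : ‖x • deriv m θ‖ ≤ ε * M := by
      rw [norm_smul, Real.norm_eq_abs]
      exact mul_le_mul hx.le (hM θ hθ) (norm_nonneg _) hε.le
    have h3 : ε * M ≤ δ / 2 := by
      rw [hεdef]
      rw [div_mul_eq_mul_div, div_le_div_iff₀ (by positivity) (by norm_num)]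
      nlinarith
    have h4 := hδle θ hθ
    linarith
  -- the pointwise derivative in t
  set F' : ℝ → ℝ → ℝ := fun t θ =>
    (⟪h θ, k θ⟫ + A * ⟪deriv (deriv h) θ, k θ⟫ / ‖deriv c θ + t • deriv m θ‖ ^ 2) *
      (⟪deriv m θ, deriv c θ + t • deriv m θ⟫ / ‖deriv c θ + t • deriv m θ‖) with hF'def
  have hsub : Set.uIoc (0:ℝ) (2 * π) ⊆ Set.Icc 0 (2 * π) := by
    rw [Set.uIoc_of_le hπ.le]
    exact Set.Ioc_subset_Icc_self
  set B : ℝ := (C1 + A * C2 / (δ / 2) ^ 2) * M with hBdef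
  have key := intervalIntegral.hasDerivAt_integral_of_dominated_loc_of_deriv_le
    (μ := volume) (F := fun t θ =>
      (⟪h θ, k θ⟫ * ‖deriv c θ + t • deriv m θ‖ -
        A * ⟪deriv (deriv h) θ, k θ⟫ / ‖deriv c θ + t • deriv m θ‖))
    (F' := F') (x₀ := (0:ℝ)) (a := (0:ℝ)) (b := 2 * π) (bound := fun _ => B) (Metric.ball_mem_nhds 0 hε)
    ?_ ?_ ?_ ?_ ?_ ?_ |>.2
  · -- convert the value of the derivative
    have heq : Set.EqOn
        (fun θ => ⟪Ds c m θ, unitTangent c θ⟫ *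
          (⟪h θ, k θ⟫ + A * ⟪deriv (deriv h) θ, k θ⟫ / ‖deriv c θ‖ ^ 2) * ‖deriv c θ‖)
        (F' 0) (Set.uIcc 0 (2 * π)) := by
      intro θ _
      have hne : ‖deriv c θ‖ ≠ 0 := norm_ne_zero_iff.2 (himm θ)
      simp only [hF'def, Ds, unitTangent, zero_smul, add_zero, real_inner_smul_left,
        real_inner_smul_right]
      field_simp
    rw [intervalIntegral.integral_congr heq]
    exact key
  · -- measurability of F t
    filter_upwards with t
    exact (((ha.mul ((hc'.add (hm'.const_smul t)).norm)).measurable).sub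
      (((hb.measurable).const_mul A).div
        ((hc'.add (hm'.const_smul t)).norm.measurable))).aestronglyMeasurable
  · -- integrability of F 0
    apply Continuous.intervalIntegrable
    have hden : ∀ θ : ℝ, ‖deriv c θ + (0:ℝ) • deriv m θ‖ ≠ 0 := by
      intro θ; simp [himm θ]
    exact (ha.mul ((hc'.add (hm'.const_smul (0:ℝ))).norm)).sub
      (((continuous_const.mul hb)).div ((hc'.add (hm'.const_smul (0:ℝ))).norm) hden)
  · -- measurability of F' 0
    have hden : ∀ θ : ℝ, ‖deriv c θ + (0:ℝ) • deriv m θ‖ ≠ 0 := by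
      intro θ; simp [himm θ]
    have : Continuous (F' 0) := by
      apply Continuous.mul
      · exact ha.add (((continuous_const.mul hb)).div
          (((hc'.add (hm'.const_smul (0:ℝ))).norm).pow 2)
          (fun θ => pow_ne_zero 2 (hden θ)))
      · exact (hm'.inner (hc'.add (hm'.const_smul (0:ℝ)))).div
          ((hc'.add (hm'.const_smul (0:ℝ))).norm) hden
    exact this.aestronglyMeasurable
  · -- the bound
    filter_upwards with θ hθ x hx
    have hθK := hsub hθ
    rw [Metric.mem_ball, Real.dist_eq, sub_zero] at hx
    have hN : δ / 2 ≤ ‖deriv c θ + x • deriv m θ‖ := hlow θ hθK x hx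
    have hNpos : 0 < ‖deriv c θ + x • deriv m θ‖ := lt_of_lt_of_le (by positivity) hN
    set N := ‖deriv c θ + x • deriv m θ‖ with hNdef
    have h1 : |⟪h θ, k θ⟫ + A * ⟪deriv (deriv h) θ, k θ⟫ / N ^ 2|
        ≤ C1 + A * C2 / (δ / 2) ^ 2 := by
      refine (abs_add_le _ _).trans (add_le_add ?_ ?_)
      · simpa [Real.norm_eq_abs] using hC1 θ hθK
      · rw [abs_div, abs_mul, abs_of_pos hA, abs_of_pos (pow_pos hNpos 2)]
        apply div_le_div₀ (by positivity)
          (mul_le_mul_of_nonneg_left (by simpa [Real.norm_eq_abs] using hC2 θ hθK) hA.le)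
          (by positivity)
        exact pow_le_pow_left₀ (by positivity) hN 2
    have h2 : |⟪deriv m θ, deriv c θ + x • deriv m θ⟫ / N| ≤ M := by
      rw [abs_div, abs_of_pos hNpos, div_le_iff₀ hNpos]
      calc |⟪deriv m θ, deriv c θ + x • deriv m θ⟫| ≤ ‖deriv m θ‖ * N :=
            abs_real_inner_le_norm _ _
        _ ≤ M * N := mul_le_mul_of_nonneg_right (hM θ hθK) hNpos.le
    calc ‖F' x θ‖ = |⟪h θ, k θ⟫ + A * ⟪deriv (deriv h) θ, k θ⟫ / N ^ 2| *
          |⟪deriv m θ, deriv c θ + x • deriv m θ⟫ / N| := by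
          rw [hF'def]; exact abs_mul _ _
      _ ≤ (C1 + A * C2 / (δ / 2) ^ 2) * M :=
          mul_le_mul h1 h2 (abs_nonneg _) (by positivity)
  · exact intervalIntegrable_const
  · -- differentiability
    filter_upwards with θ hθ x hx
    have hθK := hsub hθ
    rw [Metric.mem_ball, Real.dist_eq, sub_zero] at hx
    have hN : δ / 2 ≤ ‖deriv c θ + x • deriv m θ‖ := hlow θ hθK x hx
    have hNpos : 0 < ‖deriv c θ + x • deriv m θ‖ := lt_of_lt_of_le (by positivity) hN
    have hune : deriv c θ + x • deriv m θ ≠ 0 := by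
      intro hcontra; rw [hcontra, norm_zero] at hNpos; exact lt_irrefl 0 hNpos
    have hn := hasDerivAt_norm_affine (deriv c θ) (deriv m θ) x hune
    have hd1 : HasDerivAt (fun s : ℝ => ⟪h θ, k θ⟫ * ‖deriv c θ + s • deriv m θ‖)
        (⟪h θ, k θ⟫ * (⟪deriv m θ, deriv c θ + x • deriv m θ⟫ / ‖deriv c θ + x • deriv m θ‖))
        x := hn.const_mul _
    have hd2 : HasDerivAt (fun s : ℝ =>
        A * ⟪deriv (deriv h) θ, k θ⟫ / ‖deriv c θ + s • deriv m θ‖)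
        ((0 * ‖deriv c θ + x • deriv m θ‖ - A * ⟪deriv (deriv h) θ, k θ⟫ *
          (⟪deriv m θ, deriv c θ + x • deriv m θ⟫ / ‖deriv c θ + x • deriv m θ‖)) /
          ‖deriv c θ + x • deriv m θ‖ ^ 2) x :=
      (hasDerivAt_const x _).div hn (ne_of_gt hNpos)
    have := hd1.sub hd2
    convert this using 1
    · rfl
    rw [hF'def]
    have hNne : ‖deriv c θ + x • deriv m θ‖ ≠ 0 := ne_of_gt hNpos
    field_simp
    ring
end
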